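/- arXiv:2105.01504 — 3 statements merged into one kernel-verified Lean document; each statement's English description precedes it below -/
import Mathlib

section
/- Let Σ be a tropical fan of pure dimension d in ℝ^n. Then Σ is locally irreducible if and only if Σ is normal and, for every η ∈ Σ, the star of η is connected through codimension one. -/
/- Formalization of polyhedral-geometry notions: rational fans in ℝⁿ with lattice ℤⁿ,
tropical fans (balancing condition), conewise integral linear functions, Minkowski
weights, etc., following the paper "Homology of tropical fans" by Amini–Piquerez. -/

open Classical MvPolynomial
open scoped TensorProduct DirectSum

noncomputable section

/-- The ambient space `ℝ^n`. -/
abbrev V (n : ℕ) : Type := Fin n → ℝ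

/-- The inclusion of the lattice `ℤ^n` into `ℝ^n`. -/
def intVec {n : ℕ} (v : Fin n → ℤ) : V n := fun i => (v i : ℝ)

lemma intVec_zero {n : ℕ} : intVec (0 : Fin n → ℤ) = 0 := by
  funext i; simp [intVec]

lemma intVec_add {n : ℕ} (a b : Fin n → ℤ) : intVec (a + b) = intVec a + intVec b := by
  funext i; simp [intVec]

lemma intVec_neg {n : ℕ} (a : Fin n → ℤ) : intVec (-a) = -intVec a := by
  funext i; simp [intVec]

/-- The pairing between `M = Hom(ℤ^n, ℤ)` (an element of which is represented by its
coefficient vector) and the lattice `ℤ^n`. -/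
def pairZ {n : ℕ} (ℓ v : Fin n → ℤ) : ℤ := ∑ i, ℓ i * v i

/-- The pairing between an element of `M` and a vector of `ℝ^n`, i.e. the linear form
on `ℝ^n` defined by an element of `M`. -/
def pairR {n : ℕ} (ℓ : Fin n → ℤ) (x : V n) : ℝ := ∑ i, (ℓ i : ℝ) * x i

/-- `σ` is a rational cone: the set of nonnegative combinations of a finite set of
integer vectors. -/
def IsRationalCone {n : ℕ} (σ : Set (V n)) : Prop :=
  ∃ S : Finset (Fin n → ℤ),
    σ = {x | ∃ lam : (Fin n → ℤ) → ℝ, (∀ v, 0 ≤ lam v) ∧ x = ∑ v ∈ S, lam v • intVec v}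

/-- A cone is strongly convex if `σ ∩ (-σ) = {0}`. -/
def StronglyConvex {n : ℕ} (σ : Set (V n)) : Prop := σ ∩ (-σ) = {0}

/-- `τ` is a face of the cone `σ`: `τ = σ ∩ ker ℓ` for a linear form `ℓ` nonnegative
on `σ`. -/
def IsFaceOf {n : ℕ} (τ σ : Set (V n)) : Prop :=
  ∃ ℓ : (V n) →ₗ[ℝ] ℝ, (∀ x ∈ σ, 0 ≤ ℓ x) ∧ τ = σ ∩ {x | ℓ x = 0}

/-- A (rational) fan in `ℝ^n`: a finite nonempty collection of strongly convex rational
cones, closed under taking faces, such that the intersection of any two cones is a face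
of each of them. -/
structure IsFan {n : ℕ} (F : Finset (Set (V n))) : Prop where
  nonempty : F.Nonempty
  rat : ∀ σ ∈ F, IsRationalCone σ
  convex : ∀ σ ∈ F, StronglyConvex σ
  faces_mem : ∀ σ ∈ F, ∀ τ : Set (V n), IsFaceOf τ σ → τ ∈ F
  inter_face_left : ∀ σ ∈ F, ∀ σ' ∈ F, IsFaceOf (σ ∩ σ') σ
  inter_face_right : ∀ σ ∈ F, ∀ σ' ∈ F, IsFaceOf (σ ∩ σ') σ'

/-- The dimension of a cone: the dimension of its real linear span. -/
def dimC {n : ℕ} (σ : Set (V n)) : ℕ := Module.finrank ℝ ↥(Submodule.span ℝ σ)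

/-- `v ∈ N_σ := ℤ^n ∩ span_ℝ(σ)`. -/
def memLat {n : ℕ} (σ : Set (V n)) (v : Fin n → ℤ) : Prop :=
  intVec v ∈ Submodule.span ℝ σ

/-- `v` is a normal vector `n_{σ/τ}` for the codimension-one face `τ` of `σ`:
`v ∈ N_σ ∩ (σ + span_ℝ(τ))` and `N_τ + ℤ·v = N_σ`. -/
def IsNormalVector {n : ℕ} (σ τ : Set (V n)) (v : Fin n → ℤ) : Prop :=
  memLat σ v ∧ (∃ y ∈ σ, ∃ z ∈ Submodule.span ℝ τ, intVec v = y + z) ∧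
  ∀ w : Fin n → ℤ, memLat σ w ↔ ∃ u : Fin n → ℤ, ∃ k : ℤ, memLat τ u ∧ w = u + k • v

/-- The cones of `F` of dimension `d` containing `τ`. -/
def facets {n : ℕ} (F : Finset (Set (V n))) (d : ℕ) (τ : Set (V n)) :
    Finset (Set (V n)) :=
  F.filter fun σ => dimC σ = d ∧ τ ⊆ σ

/-- `Σ_k`: the `k`-dimensional cones of the fan. -/
def conesK {n : ℕ} (F : Finset (Set (V n))) (k : ℕ) : Finset (Set (V n)) :=
  F.filter fun σ => dimC σ = k

/-- A tropical fan of pure dimension `d`: a rational fan, pure of dimension `d`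
(every maximal cone has dimension `d`), satisfying the balancing condition: for every
`τ ∈ Σ_{d-1}` and any choice of normal vectors, `∑_{σ ⊃ τ} n_{σ/τ} ∈ N_τ`. -/
def IsTropicalFan {n : ℕ} (F : Finset (Set (V n))) (d : ℕ) : Prop :=
  IsFan F ∧ (∀ σ ∈ F, (∀ η ∈ F, σ ⊆ η → σ = η) → dimC σ = d) ∧
  ∀ τ ∈ F, dimC τ = d - 1 →
    ∀ v : Set (V n) → Fin n → ℤ,
      (∀ σ ∈ facets F d τ, IsNormalVector σ τ (v σ)) →
      memLat τ (∑ σ ∈ facets F d τ, v σ)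

/-- `f` is conewise integral linear on the fan `F`: on each cone it agrees with an
element of `M`. -/
def ConewiseLinear {n : ℕ} (F : Finset (Set (V n))) (f : V n → ℝ) : Prop :=
  ∀ σ ∈ F, ∃ ℓ : Fin n → ℤ, ∀ x ∈ σ, f x = pairR ℓ x

/-- A Minkowski weight of dimension `k` on the fan `F`: an integer weight on `Σ_k`
satisfying the balancing condition. -/
def IsMinkowskiWeight {n : ℕ} (F : Finset (Set (V n))) (k : ℕ) (w : Set (V n) → ℤ) :
    Prop :=
  ∀ τ ∈ F, dimC τ = k - 1 →
    ∀ u : Set (V n) → Fin n → ℤ,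
      (∀ σ ∈ facets F k τ, IsNormalVector σ τ (u σ)) →
      memLat τ (∑ σ ∈ facets F k τ, w σ • u σ)

/-- A tropical fan of dimension `d` is normal (smooth in codimension one) if, for every
`τ ∈ Σ_{d-1}`, any choice of normal vectors and any real coefficients `a_σ` with
`∑_{σ ⊃ τ} a_σ · n_{σ/τ} ∈ span_ℝ(τ)`, all the `a_σ` are equal. -/
def IsNormalTropicalFan {n : ℕ} (F : Finset (Set (V n))) (d : ℕ) : Prop :=
  ∀ τ ∈ F, dimC τ = d - 1 →
    ∀ v : Set (V n) → Fin n → ℤ,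
      (∀ σ ∈ facets F d τ, IsNormalVector σ τ (v σ)) →
      ∀ a : Set (V n) → ℝ,
        (∑ σ ∈ facets F d τ, a σ • intVec (v σ)) ∈ Submodule.span ℝ τ →
        ∀ σ ∈ facets F d τ, ∀ σ' ∈ facets F d τ, a σ = a σ'

/-- The tropical fan `F` of dimension `d` is irreducible at the cone `η`: every integer
weight on the facets of the star of `η` satisfying the balancing condition at every
codimension-one cone of the star of `η` is constant. -/
def IrreducibleAt {n : ℕ} (F : Finset (Set (V n))) (d : ℕ) (η : Set (V n)) : Prop :=
  ∀ w : Set (V n) → ℤ,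
    (∀ τ ∈ F, dimC τ = d - 1 → η ⊆ τ →
      ∀ u : Set (V n) → Fin n → ℤ,
        (∀ σ ∈ facets F d τ, IsNormalVector σ τ (u σ)) →
        memLat τ (∑ σ ∈ facets F d τ, w σ • u σ)) →
    ∀ σ ∈ facets F d η, ∀ σ' ∈ facets F d η, w σ = w σ'

/-- Connectivity through codimension one of the star of `η`: the graph whose vertices
are the facets containing `η`, two being adjacent when they share a codimension-one
cone containing `η`, is connected. -/
def StarConnected {n : ℕ} (F : Finset (Set (V n))) (d : ℕ) (η : Set (V n)) : Prop :=
  ∀ σ ∈ facets F d η, ∀ σ' ∈ facets F d η,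
    Relation.ReflTransGen (fun a b =>
      a ∈ facets F d η ∧ b ∈ facets F d η ∧
      ∃ τ ∈ F, dimC τ = d - 1 ∧ η ⊆ τ ∧ τ ⊆ a ∧ τ ⊆ b) σ σ'

/-! If `Σ` is normal and every star is connected through codimension one, a weight that is
balanced on the star of `η` takes equal values on the facets around each codimension-one cone
(normality applied to its real values), hence is constant along paths in the star.
Conversely, the indicator of a connected component of the star of `η` is balanced, so
irreducibility forces connectedness. For normality at a codimension-one cone `τ`, the real
solutions `a` of `∑ a_σ n_{σ/τ} ∈ span τ` form a subspace cut out by integer equations, so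
they are spanned by integer solutions; these are balanced weights, hence constant.

The lattice input is that normal vectors exist and are unique modulo `N_τ`. For existence,
pick an integral form `m` vanishing on `span τ` but not on `σ`; then `m(N_σ)` is a cyclic
subgroup of `ℤ` and a suitably signed lift of a generator is `n_{σ/τ}`. -/

namespace Matrix

variable {ι κ : Type*} [Fintype ι] [Fintype κ]

theorem exists_vecMul_eq_of_ker_le {K : Type*} [Field K] (A : Matrix κ ι K) (φ : ι → K)
    (h : ∀ x, A *ᵥ x = 0 → φ ⬝ᵥ x = 0) : ∃ c : κ → K, c ᵥ* A = φ := by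
  have hker : ⨅ k, LinearMap.ker (dotProductEquiv K ι (A k)) ≤
      LinearMap.ker (dotProductEquiv K ι φ) := fun x hx => by
    simp only [Submodule.mem_iInf, LinearMap.mem_ker, dotProductEquiv_apply_apply] at hx ⊢
    exact h x (funext hx)
  obtain ⟨c, hc⟩ := (Submodule.mem_span_range_iff_exists_fun K).mp
    (mem_span_of_iInf_ker_le_ker hker)
  refine ⟨c, (dotProductEquiv K ι).injective ?_⟩
  rw [← hc, vecMul_eq_sum, map_sum]
  simp_rw [map_smul]

theorem map_dotProduct_eq_zero_of_ker_le {K L : Type*} [Field K] [Ring L] (f : K →+* L)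
    (A : Matrix κ ι K) (φ : ι → K) (h : ∀ x, A *ᵥ x = 0 → φ ⬝ᵥ x = 0)
    (x : ι → L) (hx : A.map f *ᵥ x = 0) : (f ∘ φ) ⬝ᵥ x = 0 := by
  obtain ⟨c, rfl⟩ := A.exists_vecMul_eq_of_ker_le φ h
  rw [show f ∘ (c ᵥ* A) = (f ∘ c) ᵥ* A.map f from funext (RingHom.map_vecMul f A c),
    ← dotProduct_mulVec, hx, dotProduct_zero]

theorem intCast_dotProduct_eq_zero_of_ker_le {L : Type*} [Field L] [CharZero L]
    (A : Matrix κ ι ℤ) (φ : ι → ℤ) (h : ∀ z, A *ᵥ z = 0 → φ ⬝ᵥ z = 0)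
    (x : ι → L) (hx : A.map Int.cast *ᵥ x = 0) : (Int.cast ∘ φ) ⬝ᵥ x = 0 := by
  have hℚ : ∀ q : ι → ℚ, A.map Int.cast *ᵥ q = 0 → (Int.cast ∘ φ) ⬝ᵥ q = 0 := by
    intro q hq
    obtain ⟨⟨N, hN⟩, hNq⟩ := IsLocalization.exist_integer_multiples_of_finite
      (nonZeroDivisors ℤ) q
    choose z hz using hNq
    have hzq : (Int.cast ∘ z : ι → ℚ) = (N : ℚ) • q := funext fun i => by
      simpa [Algebra.smul_def] using hz i
    have hAz : A *ᵥ z = 0 := funext fun k => by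
      have := RingHom.map_mulVec (Int.castRingHom ℚ) A z k
      rw [Int.coe_castRingHom, hzq, mulVec_smul, hq, smul_zero] at this
      simpa using this
    have hφz := RingHom.map_dotProduct (Int.castRingHom ℚ) φ z
    rw [Int.coe_castRingHom, h z hAz, hzq, dotProduct_smul, smul_eq_mul] at hφz
    have hN0 : (N : ℚ) ≠ 0 := by exact_mod_cast nonZeroDivisors.ne_zero hN
    exact (mul_eq_zero.mp (by simpa using hφz.symm)).resolve_left hN0
  have hmap : (A.map (Int.cast : ℤ → ℚ)).map (Rat.castHom L) = A.map Int.cast := by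
    ext; simp
  simpa [Function.comp_def] using
    (A.map Int.cast).map_dotProduct_eq_zero_of_ker_le (Rat.castHom L) _ hℚ x (hmap ▸ hx)

end Matrix

section Lattice

variable {n : ℕ}

def intVecL : (Fin n → ℤ) →ₗ[ℤ] V n where
  toFun := intVec
  map_add' := intVec_add
  map_smul' z a := by funext i; simp [intVec]

lemma intVec_zsmul (k : ℤ) (w : Fin n → ℤ) : intVec (k • w) = (k : ℝ) • intVec w := by
  funext i; simp [intVec]

lemma intVec_sum {α : Type*} (s : Finset α) (f : α → Fin n → ℤ) :
    intVec (∑ a ∈ s, f a) = ∑ a ∈ s, intVec (f a) :=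
  map_sum intVecL f s

lemma intCast_dotProduct_intVec (m w : Fin n → ℤ) :
    (Int.cast ∘ m) ⬝ᵥ intVec w = ((m ⬝ᵥ w : ℤ) : ℝ) :=
  (RingHom.map_dotProduct (Int.castRingHom ℝ) m w).symm

/-- `N_σ` as a `ℤ`-submodule of `ℤ^n`. -/
def lattice (σ : Set (V n)) : Submodule ℤ (Fin n → ℤ) :=
  ((Submodule.span ℝ σ).restrictScalars ℤ).comap intVecL

lemma memLat_add {σ : Set (V n)} {a b : Fin n → ℤ} (ha : memLat σ a) (hb : memLat σ b) :
    memLat σ (a + b) :=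
  (lattice σ).add_mem ha hb

lemma memLat_sub {σ : Set (V n)} {a b : Fin n → ℤ} (ha : memLat σ a) (hb : memLat σ b) :
    memLat σ (a - b) :=
  (lattice σ).sub_mem ha hb

lemma memLat_zsmul {σ : Set (V n)} {a : Fin n → ℤ} (k : ℤ) (ha : memLat σ a) :
    memLat σ (k • a) :=
  (lattice σ).smul_mem k ha

lemma memLat_sum {σ : Set (V n)} {α : Type*} {s : Finset α} {f : α → Fin n → ℤ}
    (h : ∀ a ∈ s, memLat σ (f a)) : memLat σ (∑ a ∈ s, f a) :=
  (lattice σ).sum_mem h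

lemma memLat_neg {σ : Set (V n)} {a : Fin n → ℤ} (ha : memLat σ a) : memLat σ (-a) :=
  (lattice σ).neg_mem ha

lemma Submodule.exists_mem_forall_dvd_apply {M : Type*} [AddCommGroup M] (N : Submodule ℤ M)
    (f : M →ₗ[ℤ] ℤ) : ∃ v ∈ N, ∀ w ∈ N, f v ∣ f w := by
  obtain ⟨v, hv, hgen⟩ := Submodule.mem_map.mp (Submodule.IsPrincipal.generator_mem (N.map f))
  refine ⟨v, hv, fun w hw => ?_⟩
  obtain ⟨k, hk⟩ := (Submodule.IsPrincipal.mem_iff_eq_smul_generator (N.map f)).mp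
    (Submodule.mem_map_of_mem hw)
  exact ⟨k, by rw [hk, hgen, smul_eq_mul, mul_comm]⟩

lemma exists_dotProduct_ne_zero_of_notMem_span (T : Finset (Fin n → ℤ)) {s : Fin n → ℤ}
    (hs : intVec s ∉ Submodule.span ℝ (intVec '' ↑T)) :
    ∃ m : Fin n → ℤ, (∀ t ∈ T, m ⬝ᵥ t = 0) ∧ m ⬝ᵥ s ≠ 0 := by
  obtain ⟨f, hfs, hfT⟩ := Submodule.exists_le_ker_of_notMem hs
  set x : Fin n → ℝ := fun i => f (Pi.single i 1)
  have hf (t : Fin n → ℤ) : f (intVec t) = (Int.cast ∘ t) ⬝ᵥ x := by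
    rw [LinearMap.pi_apply_eq_sum_univ f (intVec t), dotProduct]
    refine Finset.sum_congr rfl fun i _ => ?_
    simp only [x, intVec, smul_eq_mul, Function.comp_apply, ← Pi.single_apply, Pi.single_comm]
  by_contra! hcon
  refine hfs ?_
  rw [hf]
  refine (Matrix.of fun t : T => (t : Fin n → ℤ)).intCast_dotProduct_eq_zero_of_ker_le s
    (fun z hz => ?_) x (funext fun t => ?_)
  · rw [dotProduct_comm]
    exact hcon z fun t ht => by rw [dotProduct_comm]; exact congrFun hz ⟨t, ht⟩
  · rw [Pi.zero_apply, ← LinearMap.mem_ker.mp (hfT (Submodule.subset_span ⟨t, t.2, rfl⟩)), hf]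
    rfl

end Lattice

section Cones

variable {n : ℕ}

lemma IsRationalCone.smul_mem {σ : Set (V n)} (hσ : IsRationalCone σ) {c : ℝ} (hc : 0 ≤ c)
    {y : V n} (hy : y ∈ σ) : c • y ∈ σ := by
  obtain ⟨S, rfl⟩ := hσ
  obtain ⟨lam, hlam, rfl⟩ := hy
  exact ⟨fun v => c * lam v, fun v => mul_nonneg hc (hlam v),
    by rw [Finset.smul_sum]; exact Finset.sum_congr rfl fun v _ => (mul_smul c (lam v) _).symm⟩

lemma IsRationalCone.exists_span_eq {σ : Set (V n)} (hσ : IsRationalCone σ) :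
    ∃ T : Finset (Fin n → ℤ), Submodule.span ℝ σ = Submodule.span ℝ (intVec '' ↑T) ∧
      ∀ t ∈ T, intVec t ∈ σ := by
  obtain ⟨S, hS⟩ := hσ
  have hgen : ∀ t ∈ S, intVec t ∈ σ := fun t ht => hS ▸
    ⟨fun v => if v = t then 1 else 0, fun v => by positivity, by simp [ht]⟩
  refine ⟨S, le_antisymm ?_ (Submodule.span_le.mpr ?_), hgen⟩
  · rw [Submodule.span_le, hS]
    rintro _ ⟨lam, -, rfl⟩
    exact Submodule.sum_mem _ fun v hv =>
      Submodule.smul_mem _ _ (Submodule.subset_span ⟨v, hv, rfl⟩)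
  · rintro _ ⟨t, ht, rfl⟩
    exact Submodule.subset_span (hgen t ht)

lemma IsFan.eq_of_subset_of_dimC_le {F : Finset (Set (V n))} (hF : IsFan F)
    {τ σ : Set (V n)} (hτ : τ ∈ F) (hσ : σ ∈ F) (hsub : τ ⊆ σ) (hdim : dimC σ ≤ dimC τ) :
    τ = σ := by
  obtain ⟨ℓ, -, hτeq⟩ := hF.inter_face_left σ hσ τ hτ
  rw [Set.inter_eq_self_of_subset_right hsub] at hτeq
  have hspan : Submodule.span ℝ τ = Submodule.span ℝ σ :=
    Submodule.eq_of_le_of_finrank_le (Submodule.span_mono hsub) hdim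
  have hker : Submodule.span ℝ σ ≤ LinearMap.ker ℓ :=
    hspan ▸ Submodule.span_le.mpr fun x hx => (hτeq ▸ hx).2
  exact hsub.antisymm fun x hx => hτeq ▸ ⟨hx, hker (Submodule.subset_span hx)⟩

lemma IsFan.eq_of_mem_facets_zero {F : Finset (Set (V n))} (hF : IsFan F)
    {τ σ : Set (V n)} (hτ : τ ∈ F) (hσ : σ ∈ facets F 0 τ) : σ = τ := by
  obtain ⟨hσF, hσd, hτσ⟩ := Finset.mem_filter.mp hσ
  exact (hF.eq_of_subset_of_dimC_le hτ hσF hτσ (by omega)).symm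

structure IsSupportingForm (σ τ : Set (V n)) (ℓ : V n →ₗ[ℝ] ℝ) : Prop where
  nonneg : ∀ x ∈ σ, 0 ≤ ℓ x
  span_inf_ker : Submodule.span ℝ σ ⊓ LinearMap.ker ℓ = Submodule.span ℝ τ
  exists_pos : ∃ s, intVec s ∈ σ ∧ 0 < ℓ (intVec s)

lemma IsFan.exists_isSupportingForm {F : Finset (Set (V n))} (hF : IsFan F)
    {τ σ : Set (V n)} (hτ : τ ∈ F) (hσ : σ ∈ F) (hsub : τ ⊆ σ)
    (hdim : dimC σ = dimC τ + 1) : ∃ ℓ, IsSupportingForm σ τ ℓ := by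
  obtain ⟨ℓ, hpos, hτeq⟩ := hF.inter_face_left σ hσ τ hτ
  rw [Set.inter_eq_self_of_subset_right hsub] at hτeq
  obtain ⟨T, hT, hTσ⟩ := (hF.rat σ hσ).exists_span_eq
  obtain ⟨s, hsT, hs⟩ : ∃ s ∈ T, ℓ (intVec s) ≠ 0 := by
    by_contra! h
    have hker : Submodule.span ℝ σ ≤ LinearMap.ker ℓ :=
      hT ▸ Submodule.span_le.mpr (by rintro _ ⟨t, ht, rfl⟩; exact h t ht)
    have : τ = σ := hsub.antisymm fun x hx => hτeq ▸ ⟨hx, hker (Submodule.subset_span hx)⟩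
    subst this
    omega
  refine ⟨ℓ, hpos, ?_, s, hTσ s hsT, (hpos _ (hTσ s hsT)).lt_of_ne' hs⟩
  have hle : Submodule.span ℝ τ ≤ Submodule.span ℝ σ ⊓ LinearMap.ker ℓ :=
    le_inf (Submodule.span_mono hsub) (Submodule.span_le.mpr fun x hx => (hτeq ▸ hx).2)
  have hlt : Submodule.span ℝ σ ⊓ LinearMap.ker ℓ < Submodule.span ℝ σ :=
    inf_lt_left.mpr fun h => hs (h (Submodule.subset_span (hTσ s hsT)))
  have := Submodule.finrank_lt_finrank_of_lt hlt
  unfold dimC at hdim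
  exact (Submodule.eq_of_le_of_finrank_le hle (by omega)).symm

namespace IsSupportingForm

variable {σ τ : Set (V n)} {ℓ : V n →ₗ[ℝ] ℝ}

lemma span_le_ker (hℓ : IsSupportingForm σ τ ℓ) : Submodule.span ℝ τ ≤ LinearMap.ker ℓ :=
  hℓ.span_inf_ker ▸ inf_le_right

lemma memLat_iff (hℓ : IsSupportingForm σ τ ℓ) {w : Fin n → ℤ} :
    memLat τ w ↔ memLat σ w ∧ ℓ (intVec w) = 0 := by
  rw [memLat, memLat, ← hℓ.span_inf_ker]
  rfl

lemma sub_smul_mem_span (hℓ : IsSupportingForm σ τ ℓ) {x y : V n}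
    (hx : x ∈ Submodule.span ℝ σ) (hy : y ∈ Submodule.span ℝ σ) (hy0 : ℓ y ≠ 0) :
    x - (ℓ x / ℓ y) • y ∈ Submodule.span ℝ τ := by
  rw [← hℓ.span_inf_ker]
  refine ⟨Submodule.sub_mem _ hx (Submodule.smul_mem _ _ hy), ?_⟩
  simp [div_mul_cancel₀ _ hy0]

lemma pos_of_isNormalVector (hℓ : IsSupportingForm σ τ ℓ) {v : Fin n → ℤ}
    (hv : IsNormalVector σ τ v) : 0 < ℓ (intVec v) := by
  obtain ⟨hvσ, ⟨y, hy, z, hz, hvyz⟩, hgen⟩ := hv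
  have hℓv : ℓ (intVec v) = ℓ y := by
    rw [hvyz, map_add, LinearMap.mem_ker.mp (hℓ.span_le_ker hz), add_zero]
  refine (hℓv ▸ hℓ.nonneg y hy).lt_of_ne' fun h0 => ?_
  -- otherwise `N_σ = N_τ + ℤ v` would lie in `span τ`, but it contains `s` with `ℓ s > 0`
  obtain ⟨s, hsσ, hs⟩ := hℓ.exists_pos
  obtain ⟨u, k, hu, rfl⟩ := (hgen s).mp (Submodule.subset_span hsσ)
  have hvτ : memLat τ v := hℓ.memLat_iff.mpr ⟨hvσ, h0⟩
  exact hs.ne' (hℓ.memLat_iff.mp (memLat_add hu (memLat_zsmul k hvτ))).2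

lemma memLat_sub_of_isNormalVector (hℓ : IsSupportingForm σ τ ℓ) {u v : Fin n → ℤ}
    (hu : IsNormalVector σ τ u) (hv : IsNormalVector σ τ v) : memLat τ (u - v) := by
  have hℓu := hℓ.pos_of_isNormalVector hu
  have hℓv := hℓ.pos_of_isNormalVector hv
  obtain ⟨u', k, hu', rfl⟩ := (hv.2.2 u).mp hu.1
  obtain ⟨v', k', hv', hvu⟩ := (hu.2.2 v).mp hv.1
  have hlin (w : Fin n → ℤ) (hw : memLat τ w) (j : ℤ) (x : Fin n → ℤ) :
      ℓ (intVec (w + j • x)) = j * ℓ (intVec x) := by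
    rw [intVec_add, intVec_zsmul, map_add, map_smul, (hℓ.memLat_iff.mp hw).2, zero_add,
      smul_eq_mul]
  rw [hlin u' hu'] at hℓu
  have hk : 0 < k := by exact_mod_cast pos_of_mul_pos_left hℓu hℓv.le
  have hk' : k' * k = 1 := by
    have h := hlin v' hv' k' (u' + k • v)
    rw [← hvu, hlin u' hu'] at h
    have : ((k' * k : ℤ) : ℝ) = 1 := by
      push_cast
      nlinarith
    exact_mod_cast this
  rw [Int.eq_one_of_mul_eq_one_left hk.le hk', one_smul, add_sub_cancel_right]
  exact hu'

lemma exists_dotProduct_eq_zero_iff (hℓ : IsSupportingForm σ τ ℓ) (hτ : IsRationalCone τ) :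
    ∃ m : Fin n → ℤ, ∀ w, memLat σ w → (memLat τ w ↔ m ⬝ᵥ w = 0) := by
  obtain ⟨s, hsσ, hs⟩ := hℓ.exists_pos
  have hsN : memLat σ s := Submodule.subset_span hsσ
  obtain ⟨T, hT, -⟩ := hτ.exists_span_eq
  obtain ⟨m, hmT, hms⟩ := exists_dotProduct_ne_zero_of_notMem_span T (s := s) fun h =>
    hs.ne' (hℓ.memLat_iff.mp (by rw [memLat, hT]; exact h)).2
  have hm : Submodule.span ℝ τ ≤ LinearMap.ker (dotProductEquiv ℝ (Fin n) (Int.cast ∘ m)) := by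
    rw [hT, Submodule.span_le]
    rintro _ ⟨t, ht, rfl⟩
    simp [intCast_dotProduct_intVec, hmT t ht]
  refine ⟨m, fun w hw => ?_⟩
  have h := hm (hℓ.sub_smul_mem_span hw hsN hs.ne')
  simp only [LinearMap.mem_ker, dotProductEquiv_apply_apply, dotProduct_sub, dotProduct_smul,
    intCast_dotProduct_intVec, smul_eq_mul, sub_eq_zero] at h
  rw [hℓ.memLat_iff, ← Int.cast_eq_zero (α := ℝ), h]
  simp [hw, hs.ne', hms]

lemma exists_pos_forall_dvd (hℓ : IsSupportingForm σ τ ℓ) {m : Fin n → ℤ}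
    (hm : ∀ w, memLat σ w → (memLat τ w ↔ m ⬝ᵥ w = 0)) :
    ∃ v, memLat σ v ∧ 0 < ℓ (intVec v) ∧ ∀ w, memLat σ w → m ⬝ᵥ v ∣ m ⬝ᵥ w := by
  obtain ⟨v, hv, hdvd⟩ := (lattice σ).exists_mem_forall_dvd_apply (dotProductEquiv ℤ _ m)
  simp only [dotProductEquiv_apply_apply] at hdvd
  obtain ⟨s, hsσ, hs⟩ := hℓ.exists_pos
  have hsN : memLat σ s := Submodule.subset_span hsσ
  have hℓv : ℓ (intVec v) ≠ 0 := fun h => by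
    have hms : m ⬝ᵥ s = 0 :=
      zero_dvd_iff.mp ((hm v hv).mp (hℓ.memLat_iff.mpr ⟨hv, h⟩) ▸ hdvd s hsN)
    exact hs.ne' (hℓ.memLat_iff.mp ((hm s hsN).mpr hms)).2
  rcases hℓv.lt_or_gt with h | h
  · refine ⟨-v, memLat_neg hv, ?_, fun w hw => ?_⟩
    · rw [intVec_neg, map_neg]
      exact neg_pos.mpr h
    · rw [dotProduct_neg, neg_dvd]
      exact hdvd w hw
  · exact ⟨v, hv, h, hdvd⟩

lemma exists_isNormalVector (hℓ : IsSupportingForm σ τ ℓ) (hσ : IsRationalCone σ)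
    (hτ : IsRationalCone τ) : ∃ v, IsNormalVector σ τ v := by
  obtain ⟨m, hm⟩ := hℓ.exists_dotProduct_eq_zero_iff hτ
  obtain ⟨v, hv, hℓv, hdvd⟩ := hℓ.exists_pos_forall_dvd hm
  obtain ⟨s, hsσ, hs⟩ := hℓ.exists_pos
  have hsN : memLat σ s := Submodule.subset_span hsσ
  refine ⟨v, hv, ⟨(ℓ (intVec v) / ℓ (intVec s)) • intVec s,
    hσ.smul_mem (div_pos hℓv hs).le hsσ, _, hℓ.sub_smul_mem_span hv hsN hs.ne', by abel⟩,
    fun w => ⟨fun hw => ?_, ?_⟩⟩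
  · obtain ⟨k, hk⟩ := hdvd w hw
    refine ⟨w - k • v, k, (hm _ (memLat_sub hw (memLat_zsmul k hv))).mpr ?_, by abel⟩
    rw [dotProduct_sub, dotProduct_smul, hk, smul_eq_mul, mul_comm, sub_self]
  · rintro ⟨u, k, hu, rfl⟩
    exact memLat_add (hℓ.memLat_iff.mp hu).1 (memLat_zsmul k hv)

end IsSupportingForm

end Cones

section Balancing

variable {n d : ℕ} {F : Finset (Set (V n))}

def IsBalancedAt (F : Finset (Set (V n))) (d : ℕ) (w : Set (V n) → ℤ) (τ : Set (V n)) :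
    Prop :=
  ∀ u : Set (V n) → Fin n → ℤ, (∀ σ ∈ facets F d τ, IsNormalVector σ τ (u σ)) →
    memLat τ (∑ σ ∈ facets F d τ, w σ • u σ)

lemma mem_facets {τ σ : Set (V n)} : σ ∈ facets F d τ ↔ σ ∈ F ∧ dimC σ = d ∧ τ ⊆ σ :=
  Finset.mem_filter

lemma mem_facets_of_subset {η τ σ : Set (V n)} (hσ : σ ∈ facets F d η) (hτσ : τ ⊆ σ) :
    σ ∈ facets F d τ :=
  mem_facets.mpr ⟨(mem_facets.mp hσ).1, (mem_facets.mp hσ).2.1, hτσ⟩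

def starAdj (F : Finset (Set (V n))) (d : ℕ) (η : Set (V n)) (a b : Set (V n)) : Prop :=
  a ∈ facets F d η ∧ b ∈ facets F d η ∧ ∃ τ ∈ F, dimC τ = d - 1 ∧ η ⊆ τ ∧ τ ⊆ a ∧ τ ⊆ b

lemma starConnected_iff {η : Set (V n)} : StarConnected F d η ↔
    ∀ σ ∈ facets F d η, ∀ σ' ∈ facets F d η, Relation.ReflTransGen (starAdj F d η) σ σ' :=
  Iff.rfl

lemma IsFan.exists_isSupportingForm_of_mem_facets (hF : IsFan F) {τ σ : Set (V n)}
    (hτ : τ ∈ F) (hτd : dimC τ = d - 1) (hd : 0 < d) (hσ : σ ∈ facets F d τ) :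
    ∃ ℓ, IsSupportingForm σ τ ℓ := by
  obtain ⟨hσF, hσd, hτσ⟩ := mem_facets.mp hσ
  exact hF.exists_isSupportingForm hτ hσF hτσ (by omega)

lemma IsFan.exists_isNormalVector_family (hF : IsFan F) {τ : Set (V n)} (hτ : τ ∈ F)
    (hτd : dimC τ = d - 1) (hd : 0 < d) :
    ∃ v : Set (V n) → Fin n → ℤ, ∀ σ ∈ facets F d τ, IsNormalVector σ τ (v σ) := by
  have h : ∀ σ ∈ facets F d τ, ∃ v, IsNormalVector σ τ v := fun σ hσ => by
    obtain ⟨ℓ, hℓ⟩ := hF.exists_isSupportingForm_of_mem_facets hτ hτd hd hσ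
    exact hℓ.exists_isNormalVector (hF.rat σ (mem_facets.mp hσ).1) (hF.rat τ hτ)
  choose! v hv using h
  exact ⟨v, hv⟩

lemma IsFan.isBalancedAt_of_memLat (hF : IsFan F) {τ : Set (V n)} (hτ : τ ∈ F)
    (hτd : dimC τ = d - 1) (hd : 0 < d) {w : Set (V n) → ℤ} {v : Set (V n) → Fin n → ℤ}
    (hv : ∀ σ ∈ facets F d τ, IsNormalVector σ τ (v σ))
    (h : memLat τ (∑ σ ∈ facets F d τ, w σ • v σ)) : IsBalancedAt F d w τ := by
  intro u hu
  rw [← add_sub_cancel (∑ σ ∈ facets F d τ, w σ • v σ) (∑ σ ∈ facets F d τ, w σ • u σ),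
    ← Finset.sum_sub_distrib]
  refine memLat_add h (memLat_sum fun σ hσ => ?_)
  obtain ⟨ℓ, hℓ⟩ := hF.exists_isSupportingForm_of_mem_facets hτ hτd hd hσ
  rw [← smul_sub]
  exact memLat_zsmul _ (hℓ.memLat_sub_of_isNormalVector (hu σ hσ) (hv σ hσ))

lemma IsTropicalFan.isBalancedAt_of_forall_eq (hF : IsTropicalFan F d) {τ : Set (V n)}
    (hτ : τ ∈ F) (hτd : dimC τ = d - 1) {w : Set (V n) → ℤ} (c : ℤ)
    (hw : ∀ σ ∈ facets F d τ, w σ = c) : IsBalancedAt F d w τ := by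
  intro u hu
  rw [Finset.sum_congr rfl fun σ hσ => by rw [hw σ hσ], ← Finset.smul_sum]
  exact memLat_zsmul c (hF.2.2 τ hτ hτd u hu)

lemma IsNormalTropicalFan.eq_of_isBalancedAt (hN : IsNormalTropicalFan F d) (hF : IsFan F)
    {τ : Set (V n)} (hτ : τ ∈ F) (hτd : dimC τ = d - 1) {w : Set (V n) → ℤ}
    (hw : IsBalancedAt F d w τ) {σ σ' : Set (V n)} (hσ : σ ∈ facets F d τ)
    (hσ' : σ' ∈ facets F d τ) : w σ = w σ' := by
  rcases Nat.eq_zero_or_pos d with rfl | hd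
  · rw [hF.eq_of_mem_facets_zero hτ hσ, hF.eq_of_mem_facets_zero hτ hσ']
  obtain ⟨u, hu⟩ := hF.exists_isNormalVector_family hτ hτd hd
  have hreal : ∑ ρ ∈ facets F d τ, (w ρ : ℝ) • intVec (u ρ) ∈ Submodule.span ℝ τ := by
    simpa only [memLat, intVec_sum, intVec_zsmul] using hw u hu
  exact_mod_cast hN τ hτ hτd u hu _ hreal σ hσ σ' hσ'

open Matrix in
/-- The real relations among the normal vectors modulo `span τ` are spanned by the integer
ones, which are balanced weights. -/
lemma IsFan.eq_of_irreducibleAt (hF : IsFan F) {τ : Set (V n)} (hτ : τ ∈ F)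
    (hτd : dimC τ = d - 1) (hirr : IrreducibleAt F d τ) {v : Set (V n) → Fin n → ℤ}
    (hv : ∀ σ ∈ facets F d τ, IsNormalVector σ τ (v σ)) (a : Set (V n) → ℝ)
    (ha : ∑ σ ∈ facets F d τ, a σ • intVec (v σ) ∈ Submodule.span ℝ τ)
    {σ₁ σ₂ : Set (V n)} (h₁ : σ₁ ∈ facets F d τ) (h₂ : σ₂ ∈ facets F d τ) : a σ₁ = a σ₂ := by
  rcases Nat.eq_zero_or_pos d with rfl | hd
  · rw [hF.eq_of_mem_facets_zero hτ h₁, hF.eq_of_mem_facets_zero hτ h₂]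
  obtain ⟨T, hT, -⟩ := (hF.rat τ hτ).exists_span_eq
  set S := facets F d τ
  let c : S ⊕ T → Fin n → ℤ := Sum.elim (fun σ => v σ) (fun t => t)
  have hmul (z : S ⊕ T → ℤ) : (Matrix.of c)ᵀ *ᵥ z =
      ∑ σ : S, z (.inl σ) • v σ + ∑ t : T, z (.inr t) • (t : Fin n → ℤ) := by
    rw [mulVec_transpose, vecMul_eq_sum, Fintype.sum_sum_type]
    rfl
  have hmulℝ (x : S ⊕ T → ℝ) : (Matrix.of c)ᵀ.map Int.cast *ᵥ x =
      ∑ σ : S, x (.inl σ) • intVec (v σ) + ∑ t : T, x (.inr t) • intVec t := by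
    rw [transpose_map, mulVec_transpose, vecMul_eq_sum,
      Fintype.sum_sum_type]
    rfl
  let φ : S ⊕ T → ℤ := Pi.single (.inl ⟨σ₁, h₁⟩) 1 - Pi.single (.inl ⟨σ₂, h₂⟩) 1
  have hint : ∀ z, (Matrix.of c)ᵀ *ᵥ z = 0 → φ ⬝ᵥ z = 0 := by
    intro z hz
    let W (σ : Set (V n)) : ℤ := if h : σ ∈ S then z (.inl ⟨σ, h⟩) else 0
    have hW : memLat τ (∑ σ ∈ S, W σ • v σ) := by
      have hWz : ∑ σ : S, W σ • v σ = -∑ t : T, z (.inr t) • (t : Fin n → ℤ) :=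
        eq_neg_of_add_eq_zero_left (by rw [← hz, hmul]; simp [W])
      rw [← Finset.sum_coe_sort S, hWz]
      refine memLat_neg (memLat_sum fun t _ => memLat_zsmul _ ?_)
      rw [memLat, hT]
      exact Submodule.subset_span ⟨t, t.2, rfl⟩
    have hbal := hF.isBalancedAt_of_memLat hτ hτd hd hv hW
    have hW₁₂ := hirr W (fun τ' hτ' hτ'd hττ' =>
      hF.eq_of_subset_of_dimC_le hτ hτ' hττ' (by omega) ▸ hbal) σ₁ h₁ σ₂ h₂
    simp only [W, dif_pos h₁, dif_pos h₂] at hW₁₂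
    simp [φ, hW₁₂]
  obtain ⟨b, hb⟩ := (Submodule.mem_span_image_finset_iff_exists_fun ℝ).mp (hT ▸ ha)
  have := (Matrix.of c)ᵀ.intCast_dotProduct_eq_zero_of_ker_le φ hint
    (Sum.elim (fun σ => a σ) (-b)) (by
      rw [hmulℝ]
      simp only [Sum.elim_inl, Sum.elim_inr, Pi.neg_apply, neg_smul, Finset.sum_neg_distrib]
      rw [Finset.sum_coe_sort S (fun σ => a σ • intVec (v σ)), ← hb, add_neg_cancel])
  have hφ : (Int.cast ∘ φ : S ⊕ T → ℝ) =
      Pi.single (.inl ⟨σ₁, h₁⟩) 1 - Pi.single (.inl ⟨σ₂, h₂⟩) 1 := by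
    ext k
    simp [φ, Pi.single_apply]
  simpa [hφ, sub_dotProduct, sub_eq_zero] using this

lemma IsTropicalFan.starConnected_of_irreducibleAt (hF : IsTropicalFan F d)
    {η : Set (V n)} (hη : IrreducibleAt F d η) : StarConnected F d η := by
  intro σ hσ σ' hσ'
  -- the indicator of the connected component of `σ` is balanced, hence constant
  let reach (ρ : Set (V n)) : Prop := Relation.ReflTransGen (starAdj F d η) σ ρ
  let w (ρ : Set (V n)) : ℤ := if reach ρ then 1 else 0
  have hbal : ∀ τ ∈ F, dimC τ = d - 1 → η ⊆ τ → IsBalancedAt F d w τ := by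
    intro τ hτ hτd hητ
    refine hF.isBalancedAt_of_forall_eq hτ hτd (if ∃ ρ ∈ facets F d τ, reach ρ then 1 else 0)
      fun ρ hρ => if_congr ⟨fun h => ⟨ρ, hρ, h⟩, fun ⟨ρ', hρ', h⟩ => h.tail ?_⟩ rfl rfl
    have hη (ρ) (hρ : ρ ∈ facets F d τ) : ρ ∈ facets F d η :=
      mem_facets_of_subset hρ (hητ.trans (mem_facets.mp hρ).2.2)
    exact ⟨hη ρ' hρ', hη ρ hρ, τ, hτ, hτd, hητ, (mem_facets.mp hρ').2.2, (mem_facets.mp hρ).2.2⟩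
  have h : w σ' = w σ := hη w hbal σ' hσ' σ hσ
  have h₁ : w σ = 1 := if_pos Relation.ReflTransGen.refl
  by_contra hσσ'
  have h₀ : w σ' = 0 := if_neg hσσ'
  omega

lemma IsNormalTropicalFan.irreducibleAt_of_starConnected (hN : IsNormalTropicalFan F d)
    (hF : IsFan F) {η : Set (V n)} (hη : StarConnected F d η) : IrreducibleAt F d η := by
  intro w hw σ hσ σ' hσ'
  have hpath := starConnected_iff.mp hη σ hσ σ' hσ'
  clear hσ'
  induction hpath with
  | refl => rfl
  | tail _ hadj ih =>
    obtain ⟨ha, hb, τ, hτ, hτd, hητ, hτa, hτb⟩ := hadj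
    exact ih.trans (hN.eq_of_isBalancedAt hF hτ hτd (hw τ hτ hτd hητ)
      (mem_facets_of_subset ha hτa) (mem_facets_of_subset hb hτb))

end Balancing

/-- A tropical fan of pure dimension `d` is locally irreducible if and
only if it is normal and the star of every cone is connected through codimension
one. -/
theorem locallyIrreducible_iff_normal_and_starConnected {n d : ℕ}
    (F : Finset (Set (V n))) (hF : IsTropicalFan F d) :
    (∀ η ∈ F, IrreducibleAt F d η) ↔
      (IsNormalTropicalFan F d ∧ ∀ η ∈ F, StarConnected F d η) :=
  ⟨fun hirr =>
    ⟨fun τ hτ hτd _ hv a ha _ h₁ _ h₂ =>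
        hF.1.eq_of_irreducibleAt hτ hτd (hirr τ hτ) hv a ha h₁ h₂,
      fun η hη => hF.starConnected_of_irreducibleAt (hirr η hη)⟩,
    fun ⟨hN, hc⟩ η hη => hN.irreducibleAt_of_starConnected hF.1 (hc η hη)⟩

end
end

section
/- Let Σ be a unimodular tropical fan of pure dimension d in ℝ^n and let deg : A^d(Σ) → ℤ be the unique ℤ-linear map with deg([x_σ]) = 1 for every σ ∈ Σ_d. Let a : Σ₁ → ℤ and set α := ∑_{ρ∈Σ₁} a_ρ·x_ρ. Then for every τ ∈ Σ_{d−1}: deg([α·x_τ]) = ∑_{ρ∈Σ₁ : τ∪{ρ}∈Σ_d} a_ρ − f_τ(∑_{ρ∈Σ₁ : τ∪{ρ}∈Σ_d} e_ρ), where f_τ is the unique linear form on span_ℝ(τ) with f_τ(e_ϱ) = a_ϱ for every ray ϱ of τ (the vector ∑_{ρ : τ∪{ρ}∈Σ_d} e_ρ lies in N_τ ⊆ span_ℝ(τ) by the balancing condition and unimodularity). In other words, deg([α·x_τ]) = −ord_τ(f) for the conewise integral linear function f on Σ taking value a_ρ at e_ρ for every ray ρ. -/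
/- Formalization of polyhedral-geometry notions: rational fans in ℝⁿ with lattice ℤⁿ,
tropical fans (balancing condition), conewise integral linear functions, Minkowski
weights, etc., following the paper "Homology of tropical fans" by Amini–Piquerez. -/

open Classical MvPolynomial
open scoped TensorProduct DirectSum

noncomputable section

/-- The rays (one-dimensional cones) of the fan. -/
def raysF {n : ℕ} (F : Finset (Set (V n))) : Finset (Set (V n)) :=
  F.filter fun ρ => dimC ρ = 1

/-- The type of rays of the fan `F`. -/
abbrev RayT {n : ℕ} (F : Finset (Set (V n))) : Type := {ρ : Set (V n) // ρ ∈ raysF F}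

/-- The rays of the cone `σ` in the fan `F`. -/
def raysOfCone {n : ℕ} (F : Finset (Set (V n))) (σ : Set (V n)) :
    Finset (Set (V n)) :=
  (raysF F).filter fun ρ => ρ ⊆ σ

/-- The fan `F` is simplicial: every cone has exactly `dim σ` rays and is generated by
them (every element of `σ` is a sum of elements of the rays of `σ`). -/
def IsSimplicial {n : ℕ} (F : Finset (Set (V n))) : Prop :=
  ∀ σ ∈ F, (raysOfCone F σ).card = dimC σ ∧
    σ = {x | ∃ y : Set (V n) → V n, (∀ ρ ∈ raysOfCone F σ, y ρ ∈ ρ) ∧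
             x = ∑ ρ ∈ raysOfCone F σ, y ρ}

/-- `v = e_ρ` is the primitive generator of the ray `ρ`: the generator of the rank-one
lattice `N_ρ` lying in `ρ`. -/
def IsPrimitiveGen {n : ℕ} (ρ : Set (V n)) (v : Fin n → ℤ) : Prop :=
  v ≠ 0 ∧ intVec v ∈ ρ ∧ ∀ w : Fin n → ℤ, memLat ρ w → ∃ k : ℤ, w = k • v

/-- The fan `F` with primitive ray generators `e` is unimodular: simplicial, and for
every cone `σ`, the vectors `e_ρ`, `ρ` a ray of `σ`, form a `ℤ`-basis of `N_σ`. -/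
def IsUnimodular {n : ℕ} (F : Finset (Set (V n))) (e : Set (V n) → Fin n → ℤ) : Prop :=
  IsSimplicial F ∧
  ∀ σ ∈ F, ∀ w : Fin n → ℤ, memLat σ w →
    ∃! c : Set (V n) → ℤ, (∀ ρ, ρ ∉ raysOfCone F σ → c ρ = 0) ∧
      w = ∑ ρ ∈ raysOfCone F σ, c ρ • e ρ

/-- The monomial `x_σ = ∏_{ρ ray of σ} x_ρ` in the polynomial ring on the rays. -/
def xCone {n : ℕ} (F : Finset (Set (V n))) (σ : Set (V n)) :
    MvPolynomial (RayT F) ℤ :=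
  ∏ ρ ∈ Finset.univ.filter (fun ρ : RayT F => ρ.1 ⊆ σ), X ρ

/-- The finite set `S` of rays forms the set of rays of a cone of `F`. -/
def FormsCone {n : ℕ} (F : Finset (Set (V n))) (S : Finset (RayT F)) : Prop :=
  ∃ σ ∈ F, ∀ ρ : RayT F, ρ ∈ S ↔ ρ.1 ⊆ σ

/-- The ideal `I` generated by the monomials `x_{ρ₁} ⋯ x_{ρ_k}` over subsets of
distinct rays not forming the set of rays of a cone of `F`. -/
def idealI {n : ℕ} (F : Finset (Set (V n))) : Ideal (MvPolynomial (RayT F) ℤ) :=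
  Ideal.span {p | ∃ S : Finset (RayT F), ¬ FormsCone F S ∧ p = ∏ ρ ∈ S, X ρ}

/-- The linear polynomial `x_ℓ = ∑_ρ ℓ(e_ρ) x_ρ` associated with `ℓ ∈ M`. -/
def xLin {n : ℕ} (F : Finset (Set (V n))) (e : Set (V n) → Fin n → ℤ)
    (ℓ : Fin n → ℤ) : MvPolynomial (RayT F) ℤ :=
  ∑ ρ : RayT F, C (pairZ ℓ (e ρ.1)) * X ρ

/-- The ideal `J` generated by the linear polynomials `∑_ρ ℓ(e_ρ) x_ρ`, `ℓ ∈ M`. -/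
def idealJ {n : ℕ} (F : Finset (Set (V n))) (e : Set (V n) → Fin n → ℤ) :
    Ideal (MvPolynomial (RayT F) ℤ) :=
  Ideal.span {p | ∃ ℓ : Fin n → ℤ, p = xLin F e ℓ}

/-- The defining ideal `I + J` of the Chow ring. -/
def chowIdeal {n : ℕ} (F : Finset (Set (V n))) (e : Set (V n) → Fin n → ℤ) :
    Ideal (MvPolynomial (RayT F) ℤ) := idealI F + idealJ F e

/-- The Chow ring `A•(Σ) = ℤ[x_ρ : ρ ∈ Σ₁]/(I + J)`. -/
abbrev ChowRing {n : ℕ} (F : Finset (Set (V n))) (e : Set (V n) → Fin n → ℤ) : Type :=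
  MvPolynomial (RayT F) ℤ ⧸ chowIdeal F e

/-- The subgroup `Z^k(Σ) = ⊕_{σ ∈ Σ_k} ℤ·x_σ` of the polynomial ring. -/
def Zgroup {n : ℕ} (F : Finset (Set (V n))) (k : ℕ) :
    AddSubgroup (MvPolynomial (RayT F) ℤ) :=
  AddSubgroup.closure {p | ∃ σ ∈ conesK F k, p = xCone F σ}

/-- The degree-`k` graded piece `A^k(Σ)` of the Chow ring: the image of the homogeneous
polynomials of degree `k` in the quotient. -/
def Apiece {n : ℕ} (F : Finset (Set (V n))) (e : Set (V n) → Fin n → ℤ) (k : ℕ) :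
    AddSubgroup (ChowRing F e) :=
  AddSubgroup.closure
    {y | ∃ P : MvPolynomial (RayT F) ℤ, P.IsHomogeneous k ∧
         y = Ideal.Quotient.mk (chowIdeal F e) P}

/-- `m` is the order of vanishing `ord_τ(f)` of `f` along the codimension-one cone `τ`,
computed with some (equivalently, by well-definedness, any) choice of normal vectors
`v` and of representatives `L σ ∈ M` of `f` on the cones `σ`. -/
def IsOrderAt {n : ℕ} (F : Finset (Set (V n))) (d : ℕ) (f : V n → ℝ)
    (τ : Set (V n)) (m : ℤ) : Prop :=
  ∃ v L : Set (V n) → Fin n → ℤ,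
    (∀ σ ∈ facets F d τ, IsNormalVector σ τ (v σ)) ∧
    (∀ σ ∈ F, ∀ x ∈ σ, f x = pairR (L σ) x) ∧
    m = -(∑ σ ∈ facets F d τ, pairZ (L σ) (v σ))
        + pairZ (L τ) (∑ σ ∈ facets F d τ, v σ)

/-! By linearity `deg[α x_τ] = ∑_ρ a_ρ deg[x_ρ x_τ]`. For `ρ ∉ τ`, `deg[x_ρ x_τ]` is `1` if
`τ ∪ {ρ}` spans a facet `σ` (then `x_ρ x_τ = x_σ`) and `0` otherwise (then `x_ρ x_τ ∈ I`). For the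
rays `ϱ` of `τ`, the relations `∑_ρ ℓ(e_ρ) x_ρ x_τ ∈ J` give `∑_ρ deg[x_ρ x_τ] e_ρ = 0`, that is
`∑_ϱ deg[x_ϱ x_τ] e_ϱ = -∑_{τ ∪ {ρ} facet} e_ρ = -∑_ϱ c_ϱ e_ϱ`; since the `e_ϱ` are linearly
independent, `deg[x_ϱ x_τ] = -c_ϱ`. -/

def coneRays {n : ℕ} (F : Finset (Set (V n))) (σ : Set (V n)) : Finset (RayT F) :=
  Finset.univ.filter fun ρ : RayT F => ρ.1 ⊆ σ

def linkRays {n : ℕ} (F : Finset (Set (V n))) (d : ℕ) (τ : Set (V n)) : Finset (RayT F) :=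
  Finset.univ.filter fun ρ : RayT F => ¬ ρ.1 ⊆ τ ∧ ∃ σ ∈ conesK F d, τ ⊆ σ ∧ ρ.1 ⊆ σ

section Rays

variable {n : ℕ} {F : Finset (Set (V n))}

@[simp]
lemma mem_coneRays {σ : Set (V n)} {ρ : RayT F} : ρ ∈ coneRays F σ ↔ ρ.1 ⊆ σ := by
  simp [coneRays]

lemma mem_linkRays {d : ℕ} {τ : Set (V n)} {ρ : RayT F} :
    ρ ∈ linkRays F d τ ↔ ¬ ρ.1 ⊆ τ ∧ ∃ σ ∈ conesK F d, τ ⊆ σ ∧ ρ.1 ⊆ σ := by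
  simp [linkRays]

lemma xCone_eq_prod_coneRays (σ : Set (V n)) : xCone F σ = ∏ ρ ∈ coneRays F σ, X ρ := rfl

lemma raysOfCone_eq_map (σ : Set (V n)) :
    raysOfCone F σ = (coneRays F σ).map (Function.Embedding.subtype _) := by
  ext s
  simp [raysOfCone, coneRays, and_comm]

lemma card_coneRays (σ : Set (V n)) : (coneRays F σ).card = (raysOfCone F σ).card := by
  rw [raysOfCone_eq_map, Finset.card_map]

lemma sum_raysOfCone {M : Type*} [AddCommMonoid M] (σ : Set (V n)) (f : Set (V n) → M) :
    ∑ ϱ ∈ raysOfCone F σ, f ϱ = ∑ ϱ ∈ coneRays F σ, f ϱ.1 := by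
  rw [raysOfCone_eq_map, Finset.sum_map]
  rfl

lemma isHomogeneous_xCone (σ : Set (V n)) : (xCone F σ).IsHomogeneous (coneRays F σ).card := by
  rw [xCone_eq_prod_coneRays]
  simpa using IsHomogeneous.prod (coneRays F σ) (fun ρ => (X ρ : MvPolynomial (RayT F) ℤ))
    (fun _ => 1) fun ρ _ => isHomogeneous_X ℤ ρ

lemma IsFan.zero_mem {σ : Set (V n)} (hF : IsFan F) (hσ : σ ∈ F) : (0 : V n) ∈ σ := by
  obtain ⟨S, rfl⟩ := hF.rat σ hσ
  exact ⟨fun _ => 0, fun _ => le_rfl, by simp⟩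

lemma IsSimplicial.card_coneRays (hs : IsSimplicial F) {σ : Set (V n)} (hσ : σ ∈ F) :
    (coneRays F σ).card = dimC σ := by
  rw [_root_.card_coneRays, (hs σ hσ).1]

lemma IsSimplicial.subset_of_coneRays_subset (hs : IsSimplicial F) (hF : IsFan F)
    {τ σ : Set (V n)} (hτ : τ ∈ F) (hσ : σ ∈ F) (hsub : coneRays F τ ⊆ coneRays F σ) :
    τ ⊆ σ := by
  have hrays : raysOfCone F τ ⊆ raysOfCone F σ := by
    rw [raysOfCone_eq_map, raysOfCone_eq_map]
    exact Finset.map_subset_map.mpr hsub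
  intro x hx
  rw [(hs τ hτ).2] at hx
  obtain ⟨y, hyρ, rfl⟩ := hx
  rw [(hs σ hσ).2]
  refine ⟨fun ρ => if ρ ∈ raysOfCone F τ then y ρ else 0, fun ρ hρ => ?_, ?_⟩
  · dsimp only
    split_ifs with hρτ
    · exact hyρ ρ hρτ
    · exact hF.zero_mem (Finset.mem_filter.mp (Finset.mem_filter.mp hρ).1).1
  · rw [← Finset.sum_filter, Finset.filter_mem_eq_inter, Finset.inter_eq_right.mpr hrays]

lemma IsUnimodular.linearIndepOn {e : Set (V n) → Fin n → ℤ} (hu : IsUnimodular F e)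
    {σ : Set (V n)} (hσ : σ ∈ F) :
    LinearIndepOn ℤ (fun ρ : RayT F => e ρ.1) (coneRays F σ : Set (RayT F)) := by
  rw [linearIndepOn_finset_iff]
  intro g hg ϱ hϱ
  have hmem : ∀ s ∈ raysOfCone F σ, s ∈ raysF F := fun s hs => (Finset.mem_filter.mp hs).1
  let c : Set (V n) → ℤ := fun s => if h : s ∈ raysOfCone F σ then g ⟨s, hmem s h⟩ else 0
  have hcϱ : ∀ ϱ ∈ coneRays F σ, c ϱ.1 = g ϱ := fun ϱ hϱ => by
    have : ϱ.1 ∈ raysOfCone F σ := Finset.mem_filter.mpr ⟨ϱ.2, mem_coneRays.mp hϱ⟩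
    simp only [c, dif_pos this]
  have hsum : ∑ s ∈ raysOfCone F σ, c s • e s = 0 := by
    rw [sum_raysOfCone, ← hg]
    exact Finset.sum_congr rfl fun ϱ hϱ => by rw [hcϱ ϱ hϱ]
  obtain ⟨c₀, -, huniq⟩ := hu.2 σ hσ 0 (by simp [memLat, intVec_zero])
  have hc : c = 0 := by
    rw [huniq c ⟨fun s hs => dif_neg hs, hsum.symm⟩,
      huniq 0 ⟨fun _ _ => rfl, by simp⟩]
  rw [← hcϱ ϱ hϱ, hc, Pi.zero_apply]

lemma IsTropicalFan.one_le {d : ℕ} (hF : IsTropicalFan F d) (ρ : RayT F) : 1 ≤ d := by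
  have hρ := Finset.mem_filter.mp ρ.2
  obtain ⟨η, hηs, hηmax⟩ :=
    (F.filter (ρ.1 ⊆ ·)).exists_maximal ⟨ρ.1, Finset.mem_filter.mpr ⟨hρ.1, subset_rfl⟩⟩
  obtain ⟨hηF, hρη⟩ := Finset.mem_filter.mp hηs
  have hη : dimC η = d := hF.2.1 η hηF fun η' hη' hηη' =>
    le_antisymm hηη' (hηmax (Finset.mem_filter.mpr ⟨hη', hρη.trans hηη'⟩) hηη')
  rw [← hη, ← hρ.2]
  exact Submodule.finrank_mono (Submodule.span_mono hρη)

section Link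

variable {d : ℕ} {τ : Set (V n)}

lemma card_insert_coneRays (hF : IsTropicalFan F d) (hs : IsSimplicial F) (hτ : τ ∈ F)
    (hτd : dimC τ = d - 1) {ρ : RayT F} (hρτ : ¬ ρ.1 ⊆ τ) :
    (insert ρ (coneRays F τ)).card = d := by
  rw [Finset.card_insert_of_notMem (mt mem_coneRays.mp hρτ), hs.card_coneRays hτ, hτd]
  have := hF.one_le ρ
  omega

lemma exists_xCone_eq_X_mul_xCone (hF : IsTropicalFan F d) (hs : IsSimplicial F)
    (hτ : τ ∈ F) (hτd : dimC τ = d - 1) {ρ : RayT F} (hρ : ρ ∈ linkRays F d τ) :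
    ∃ σ ∈ conesK F d, xCone F σ = X ρ * xCone F τ := by
  obtain ⟨hρτ, σ, hσ, hτσ, hρσ⟩ := mem_linkRays.mp hρ
  obtain ⟨hσF, hσd⟩ := Finset.mem_filter.mp hσ
  have hsub : insert ρ (coneRays F τ) ⊆ coneRays F σ :=
    Finset.insert_subset (mem_coneRays.mpr hρσ) fun ϱ hϱ =>
      mem_coneRays.mpr ((mem_coneRays.mp hϱ).trans hτσ)
  have hrays : insert ρ (coneRays F τ) = coneRays F σ :=
    Finset.eq_of_subset_of_card_le hsub (by
      rw [card_insert_coneRays hF hs hτ hτd hρτ, hs.card_coneRays hσF, hσd])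
  refine ⟨σ, hσ, ?_⟩
  rw [xCone_eq_prod_coneRays, ← hrays, Finset.prod_insert (mt mem_coneRays.mp hρτ),
    xCone_eq_prod_coneRays]

lemma not_formsCone_insert_coneRays (hF : IsTropicalFan F d) (hs : IsSimplicial F)
    (hτ : τ ∈ F) (hτd : dimC τ = d - 1) {ρ : RayT F} (hρτ : ¬ ρ.1 ⊆ τ)
    (hρ : ρ ∉ linkRays F d τ) : ¬ FormsCone F (insert ρ (coneRays F τ)) := by
  rintro ⟨σ, hσF, hσ⟩
  have hrays : insert ρ (coneRays F τ) = coneRays F σ := by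
    ext ϱ
    rw [hσ, mem_coneRays]
  have hσd : dimC σ = d := by
    rw [← hs.card_coneRays hσF, ← hrays, card_insert_coneRays hF hs hτ hτd hρτ]
  have hτσ : τ ⊆ σ := hs.subset_of_coneRays_subset hF.1 hτ hσF
    (hrays ▸ Finset.subset_insert ρ (coneRays F τ))
  exact hρ (mem_linkRays.mpr ⟨hρτ, σ, Finset.mem_filter.mpr ⟨hσF, hσd⟩, hτσ,
    (hσ ρ).mp (Finset.mem_insert_self ρ _)⟩)

lemma sum_zsmul_eq_sum_linkRays_add {g : RayT F → ℤ}
    (hlink : ∀ ρ ∈ linkRays F d τ, g ρ = 1)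
    (hout : ∀ ρ : RayT F, ¬ ρ.1 ⊆ τ → ρ ∉ linkRays F d τ → g ρ = 0)
    {M : Type*} [AddCommGroup M] (f : RayT F → M) :
    ∑ ρ, g ρ • f ρ = ∑ ρ ∈ linkRays F d τ, f ρ + ∑ ϱ ∈ coneRays F τ, g ϱ • f ϱ := by
  have hdisj : Disjoint (linkRays F d τ) (coneRays F τ) := Finset.disjoint_left.mpr
    fun ρ hρ => mt mem_coneRays.mp (mem_linkRays.mp hρ).1
  rw [← Finset.sum_subset (Finset.subset_univ (linkRays F d τ ∪ coneRays F τ)),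
    Finset.sum_union hdisj]
  · exact congrArg (· + _) (Finset.sum_congr rfl fun ρ hρ => by rw [hlink ρ hρ, one_smul])
  · intro ρ _ hρ
    rw [Finset.mem_union, not_or, mem_coneRays] at hρ
    rw [hout ρ hρ.2 hρ.1, zero_smul]

end Link

end Rays

section Chow

variable {n : ℕ} {F : Finset (Set (V n))} {e : Set (V n) → Fin n → ℤ}

lemma mk_prod_X_eq_zero {S : Finset (RayT F)} (hS : ¬ FormsCone F S) :
    Ideal.Quotient.mk (chowIdeal F e) (∏ ρ ∈ S, X ρ) = 0 :=
  Ideal.Quotient.eq_zero_iff_mem.mpr <|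
    Ideal.mem_sup_left (Ideal.subset_span ⟨S, hS, rfl⟩)

lemma mk_xLin_mul_eq_zero (ℓ : Fin n → ℤ) (P : MvPolynomial (RayT F) ℤ) :
    Ideal.Quotient.mk (chowIdeal F e) (xLin F e ℓ * P) = 0 :=
  Ideal.Quotient.eq_zero_iff_mem.mpr <| Ideal.mul_mem_right _ _ <|
    Ideal.mem_sup_right (Ideal.subset_span ⟨ℓ, rfl⟩)

lemma mk_mem_Apiece {k : ℕ} {P : MvPolynomial (RayT F) ℤ} (hP : P.IsHomogeneous k) :
    Ideal.Quotient.mk (chowIdeal F e) P ∈ Apiece F e k :=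
  AddSubgroup.subset_closure ⟨P, hP, rfl⟩

lemma mk_X_mul_xCone_mem_Apiece {d : ℕ} {τ : Set (V n)} (hF : IsTropicalFan F d)
    (hs : IsSimplicial F) (hτ : τ ∈ F) (hτd : dimC τ = d - 1) (ρ : RayT F) :
    Ideal.Quotient.mk (chowIdeal F e) (X ρ * xCone F τ) ∈ Apiece F e d := by
  apply mk_mem_Apiece
  convert (isHomogeneous_X ℤ ρ).mul (isHomogeneous_xCone τ) using 1
  rw [hs.card_coneRays hτ, hτd]
  have := hF.one_le ρ
  omega

lemma coe_sum_zsmul {k : ℕ} (W : RayT F → Apiece F e k) {P : MvPolynomial (RayT F) ℤ}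
    (hW : ∀ ρ, (W ρ : ChowRing F e) = Ideal.Quotient.mk (chowIdeal F e) (X ρ * P))
    (t : RayT F → ℤ) :
    ((∑ ρ, t ρ • W ρ : Apiece F e k) : ChowRing F e) =
      Ideal.Quotient.mk (chowIdeal F e) ((∑ ρ, C (t ρ) * X ρ) * P) := by
  rw [Finset.sum_mul, map_sum, AddSubmonoidClass.coe_finsetSum]
  refine Finset.sum_congr rfl fun ρ _ => ?_
  rw [AddSubgroup.coe_zsmul, hW, zsmul_eq_mul, mul_assoc,
    eq_intCast (C : ℤ →+* MvPolynomial (RayT F) ℤ), map_mul (Ideal.Quotient.mk _) _ (X ρ * P),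
    map_intCast]

lemma sum_map_zsmul_eq_zero {k : ℕ} (W : RayT F → Apiece F e k) {P : MvPolynomial (RayT F) ℤ}
    (hW : ∀ ρ, (W ρ : ChowRing F e) = Ideal.Quotient.mk (chowIdeal F e) (X ρ * P))
    (φ : Apiece F e k →+ ℤ) : ∑ ρ, φ (W ρ) • e ρ.1 = 0 := by
  funext i
  have hxLin : xLin F e (Pi.single i 1) = ∑ ρ, C (e ρ.1 i) * X ρ := by
    simp [xLin, pairZ, Pi.single_apply]
  have hrel : ∑ ρ, e ρ.1 i • W ρ = 0 :=
    Subtype.ext <| (coe_sum_zsmul W hW _).trans <| hxLin ▸ mk_xLin_mul_eq_zero _ P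
  simpa [map_sum, mul_comm] using congrArg φ hrel

end Chow

/-- `c` encodes `f_τ`: it is the coordinate vector of `∑_{ρ : τ ∪ {ρ} ∈ Σ_d} e_ρ ∈ N_τ` in the basis
`(e_ϱ)_{ϱ ∈ τ}`, so that `∑_ϱ c_ϱ a_ϱ = f_τ(∑_ρ e_ρ)`. -/
theorem deg_divisor_formula_general {n d : ℕ}
    (F : Finset (Set (V n))) (hF : IsTropicalFan F d)
    (e : Set (V n) → Fin n → ℤ)
    (hu : IsUnimodular F e)
    (D : (Apiece F e d) →+ ℤ)
    (hD : ∀ σ ∈ conesK F d, ∀ y : Apiece F e d,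
      (y : ChowRing F e) = Ideal.Quotient.mk (chowIdeal F e) (xCone F σ) → D y = 1)
    (a : Set (V n) → ℤ)
    (τ : Set (V n)) (hτ : τ ∈ F) (hτd : dimC τ = d - 1)
    (c : Set (V n) → ℤ)
    (hc : (∑ ρ ∈ Finset.univ.filter (fun ρ : RayT F =>
              ¬ ρ.1 ⊆ τ ∧ ∃ σ ∈ conesK F d, τ ⊆ σ ∧ ρ.1 ⊆ σ), e ρ.1)
          = ∑ ϱ ∈ raysOfCone F τ, c ϱ • e ϱ)
    (y : Apiece F e d)
    (hy : (y : ChowRing F e) = Ideal.Quotient.mk (chowIdeal F e)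
      ((∑ ρ : RayT F, C (a ρ.1) * X ρ) * xCone F τ)) :
    D y = (∑ ρ ∈ Finset.univ.filter (fun ρ : RayT F =>
              ¬ ρ.1 ⊆ τ ∧ ∃ σ ∈ conesK F d, τ ⊆ σ ∧ ρ.1 ⊆ σ), a ρ.1)
          - (∑ ϱ ∈ raysOfCone F τ, c ϱ * a ϱ) := by
  have hs := hu.1
  let W : RayT F → Apiece F e d := fun ρ => ⟨_, mk_X_mul_xCone_mem_Apiece hF hs hτ hτd ρ⟩
  have hW : ∀ ρ, (W ρ : ChowRing F e) = Ideal.Quotient.mk _ (X ρ * xCone F τ) := fun _ => rfl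
  have hlink : ∀ ρ ∈ linkRays F d τ, D (W ρ) = 1 := fun ρ hρ => by
    obtain ⟨σ, hσ, hxσ⟩ := exists_xCone_eq_X_mul_xCone hF hs hτ hτd hρ
    exact hD σ hσ (W ρ) (by rw [hW, hxσ])
  have hout : ∀ ρ : RayT F, ¬ ρ.1 ⊆ τ → ρ ∉ linkRays F d τ → D (W ρ) = 0 := fun ρ hρτ hρ => by
    have hW0 : W ρ = 0 := Subtype.ext <| by
      rw [hW, xCone_eq_prod_coneRays, ← Finset.prod_insert (mt mem_coneRays.mp hρτ)]
      exact mk_prod_X_eq_zero (not_formsCone_insert_coneRays hF hs hτ hτd hρτ hρ)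
    rw [hW0, map_zero]
  have hcone : ∀ ϱ ∈ coneRays F τ, D (W ϱ) = -c ϱ.1 := by
    have hrel := sum_map_zsmul_eq_zero W hW D
    rw [sum_zsmul_eq_sum_linkRays_add hlink hout, show ∑ ρ ∈ linkRays F d τ, e ρ.1 = _ from hc,
      sum_raysOfCone, ← Finset.sum_add_distrib] at hrel
    simp_rw [← add_smul] at hrel
    intro ϱ hϱ
    linarith [linearIndepOn_finset_iff.mp (hu.linearIndepOn hτ) _ hrel ϱ hϱ]
  have hyW : y = ∑ ρ, a ρ.1 • W ρ := Subtype.ext (hy.trans (coe_sum_zsmul W hW _).symm)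
  calc D y = ∑ ρ, D (W ρ) • a ρ.1 := by simp [hyW, mul_comm]
    _ = ∑ ρ ∈ linkRays F d τ, a ρ.1 + ∑ ϱ ∈ coneRays F τ, D (W ϱ) • a ϱ.1 :=
      sum_zsmul_eq_sum_linkRays_add hlink hout _
    _ = _ := by
      rw [sum_raysOfCone, sub_eq_add_neg, ← Finset.sum_neg_distrib]
      exact congrArg (_ + ·) (Finset.sum_congr rfl fun ϱ hϱ => by
        rw [hcone ϱ hϱ, smul_eq_mul, neg_mul])

/-- Let `Σ` be a unimodular tropical fan of pure dimension `d`,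
`deg : A^d(Σ) → ℤ` the degree map, `a : Σ₁ → ℤ` and `α := ∑_ρ a_ρ x_ρ`. For
`τ ∈ Σ_{d-1}`, writing `∑_{ρ : τ∪{ρ} ∈ Σ_d} e_ρ = ∑_{ϱ ray of τ} c_ϱ e_ϱ` (the
decomposition in the basis of `N_τ` given by unimodularity, so that the value of the
linear form `f_τ` on this vector is `∑_ϱ c_ϱ a_ϱ`), one has
`deg([α·x_τ]) = ∑_{ρ : τ∪{ρ} ∈ Σ_d} a_ρ − ∑_ϱ c_ϱ a_ϱ`, i.e. `deg([α·x_τ]) = −ord_τ(f)`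
for the conewise linear function `f` taking value `a_ρ` at `e_ρ`. -/
theorem deg_divisor_formula {n d : ℕ}
    (F : Finset (Set (V n))) (hF : IsTropicalFan F d)
    (e : Set (V n) → Fin n → ℤ) (he : ∀ ρ ∈ raysF F, IsPrimitiveGen ρ (e ρ))
    (hu : IsUnimodular F e)
    (D : (Apiece F e d) →+ ℤ)
    (hD : ∀ σ ∈ conesK F d, ∀ y : Apiece F e d,
      (y : ChowRing F e) = Ideal.Quotient.mk (chowIdeal F e) (xCone F σ) → D y = 1)
    (a : Set (V n) → ℤ)
    (τ : Set (V n)) (hτ : τ ∈ F) (hτd : dimC τ = d - 1)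
    (c : Set (V n) → ℤ) (hc0 : ∀ ϱ, ϱ ∉ raysOfCone F τ → c ϱ = 0)
    (hc : (∑ ρ ∈ Finset.univ.filter (fun ρ : RayT F =>
              ¬ ρ.1 ⊆ τ ∧ ∃ σ ∈ conesK F d, τ ⊆ σ ∧ ρ.1 ⊆ σ), e ρ.1)
          = ∑ ϱ ∈ raysOfCone F τ, c ϱ • e ϱ)
    (y : Apiece F e d)
    (hy : (y : ChowRing F e) = Ideal.Quotient.mk (chowIdeal F e)
      ((∑ ρ : RayT F, C (a ρ.1) * X ρ) * xCone F τ)) :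
    D y = (∑ ρ ∈ Finset.univ.filter (fun ρ : RayT F =>
              ¬ ρ.1 ⊆ τ ∧ ∃ σ ∈ conesK F d, τ ⊆ σ ∧ ρ.1 ⊆ σ), a ρ.1)
          - (∑ ϱ ∈ raysOfCone F τ, c ϱ * a ϱ) :=
  deg_divisor_formula_general F hF e hu D hD a τ hτ hτd c hc y hy
end
end

section
/- Let M and M' be matroids on a type α with finite ground sets E := M.E and E' := M'.E satisfying E ∩ E' = {j}, and let P be a parallel connection of M and M'. Then: (1) every x : α → ℝ that is tropically balanced for P is tropically balanced for both M and M'; and (2) for all y, y' : α → ℝ such that y is tropically balanced for M and y' is tropically balanced for M', there exist x : α → ℝ and constants c, c' ∈ ℝ such that x is tropically balanced for P, x(i) = y(i) + c for all i ∈ E, and x(i) = y'(i) + c' for all i ∈ E'. -/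
/- Statement 14: tropically balanced vectors (i.e. points of the support of the
Bergman fan, by Ardila–Klivans) and parallel connections of matroids. -/

/-- `C` is a circuit of the matroid `Q`: a minimal dependent subset of the ground
set. -/
def IsCircuitOf {α : Type*} (Q : Matroid α) (C : Set α) : Prop := Minimal Q.Dep C

/-- `x : α → ℝ` is tropically balanced for the matroid `Q`: for every circuit `C` of
`Q`, the minimum of `x` over `C` is attained at least twice. -/
def TropicallyBalanced {α : Type*} (Q : Matroid α) (x : α → ℝ) : Prop :=
  ∀ C : Set α, IsCircuitOf Q C →
    ∃ i ∈ C, ∃ i' ∈ C, i ≠ i' ∧ x i = x i' ∧ ∀ k ∈ C, x i ≤ x k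

/-- `P` is a parallel connection of `M` and `M'` (whose ground sets meet exactly in
`{j}`): its ground set is `M.E ∪ M'.E` and its circuits are exactly the circuits of
`M`, the circuits of `M'`, and the sets `(C₁ ∪ C₂) \ {j}` for circuits `C₁` of `M` and
`C₂` of `M'` both containing `j`. -/
def IsParallelConnection {α : Type*} (M M' : Matroid α) (j : α) (P : Matroid α) :
    Prop :=
  P.E = M.E ∪ M'.E ∧
  ∀ C : Set α, IsCircuitOf P C ↔
    (IsCircuitOf M C ∨ IsCircuitOf M' C ∨
      ∃ C₁ C₂ : Set α, IsCircuitOf M C₁ ∧ j ∈ C₁ ∧ IsCircuitOf M' C₂ ∧ j ∈ C₂ ∧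
        C = (C₁ ∪ C₂) \ {j})

private lemma key_aux {α : Type*} (j : α) (C₁ C₂ : Set α) (x : α → ℝ)
    (hj1 : j ∈ C₁) (hj2 : j ∈ C₂) (hxj : x j = 0)
    (hdisj : ∀ i ∈ C₁, i ≠ j → ∀ i' ∈ C₂, i' ≠ j → i ≠ i')
    (i₁ : α) (hi₁ : i₁ ∈ C₁) (i₁' : α) (hi₁' : i₁' ∈ C₁) (hne₁ : i₁ ≠ i₁')
    (heq₁ : x i₁ = x i₁') (hmin₁ : ∀ k ∈ C₁, x i₁ ≤ x k)
    (i₂ : α) (hi₂ : i₂ ∈ C₂) (i₂' : α) (hi₂' : i₂' ∈ C₂) (hne₂ : i₂ ≠ i₂')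
    (heq₂ : x i₂ = x i₂') (hmin₂ : ∀ k ∈ C₂, x i₂ ≤ x k)
    (hab : x i₁ ≤ x i₂) :
    ∃ i ∈ (C₁ ∪ C₂) \ {j}, ∃ i' ∈ (C₁ ∪ C₂) \ {j}, i ≠ i' ∧ x i = x i' ∧
      ∀ k ∈ (C₁ ∪ C₂) \ {j}, x i ≤ x k := by
  have ha0 : x i₁ ≤ 0 := hxj ▸ hmin₁ j hj1
  have hmin : ∀ k ∈ (C₁ ∪ C₂) \ {j}, x i₁ ≤ x k := by
    rintro k ⟨hk | hk, -⟩
    · exact hmin₁ k hk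
    · exact hab.trans (hmin₂ k hk)
  rcases lt_or_eq_of_le ha0 with hlt | heq0
  · refine ⟨i₁, ⟨Or.inl hi₁, ?_⟩, i₁', ⟨Or.inl hi₁', ?_⟩, hne₁, heq₁, hmin⟩
    · simp only [Set.mem_singleton_iff]
      rintro rfl; exact absurd hxj (ne_of_lt hlt)
    · simp only [Set.mem_singleton_iff]
      rintro rfl; rw [← heq₁] at hxj; exact absurd hxj (ne_of_lt hlt)
  · have hb0 : x i₂ = 0 := le_antisymm (hxj ▸ hmin₂ j hj2) (heq0 ▸ hab)
    obtain ⟨p, hp, hpj, hpx⟩ : ∃ p ∈ C₁, p ≠ j ∧ x p = 0 := by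
      by_cases h : i₁ = j
      · exact ⟨i₁', hi₁', by rintro rfl; exact hne₁ h, by rw [← heq₁, heq0]⟩
      · exact ⟨i₁, hi₁, h, heq0⟩
    obtain ⟨q, hq, hqj, hqx⟩ : ∃ q ∈ C₂, q ≠ j ∧ x q = 0 := by
      by_cases h : i₂ = j
      · exact ⟨i₂', hi₂', by rintro rfl; exact hne₂ h, by rw [← heq₂, hb0]⟩
      · exact ⟨i₂, hi₂, h, hb0⟩
    refine ⟨p, ⟨Or.inl hp, hpj⟩, q, ⟨Or.inr hq, hqj⟩, hdisj p hp hpj q hq hqj,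
      by rw [hpx, hqx], fun k hk => by rw [hpx, ← heq0]; exact hmin k hk⟩

/-- Let `M`, `M'` be matroids on `α` with finite ground sets meeting
exactly in `{j}`, and `P` a parallel connection of `M` and `M'`. Then: (1) every
tropically balanced vector for `P` is tropically balanced for both `M` and `M'`; and
(2) for all `y` tropically balanced for `M` and `y'` tropically balanced for `M'`,
there exist `x` tropically balanced for `P` and constants `c, c'` with `x = y + c` on
`M.E` and `x = y' + c'` on `M'.E`. -/
theorem parallel_connection_tropically_balanced {α : Type*}
    (M M' : Matroid α) (j : α)
    (hE : M.E.Finite) (hE' : M'.E.Finite) (hEE' : M.E ∩ M'.E = {j})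
    (P : Matroid α) (hP : IsParallelConnection M M' j P) :
    (∀ x : α → ℝ, TropicallyBalanced P x →
      TropicallyBalanced M x ∧ TropicallyBalanced M' x) ∧
    (∀ y y' : α → ℝ, TropicallyBalanced M y → TropicallyBalanced M' y' →
      ∃ x : α → ℝ, ∃ c c' : ℝ, TropicallyBalanced P x ∧
        (∀ i ∈ M.E, x i = y i + c) ∧ (∀ i ∈ M'.E, x i = y' i + c')) := by
  obtain ⟨hPE, hPC⟩ := hP
  have hjM : j ∈ M.E ∩ M'.E := by rw [hEE']; exact Set.mem_singleton j
  constructor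
  · exact fun x hx => ⟨fun C hC => hx C ((hPC C).mpr (Or.inl hC)),
      fun C hC => hx C ((hPC C).mpr (Or.inr (Or.inl hC)))⟩
  · intro y y' hy hy'
    classical
    set x : α → ℝ := fun i => if i ∈ M.E then y i - y j else y' i - y' j with hxdef
    have hxM : ∀ i ∈ M.E, x i = y i - y j := fun i hi => if_pos hi
    have hxM' : ∀ i ∈ M'.E, x i = y' i - y' j := by
      intro i hi
      by_cases h : i ∈ M.E
      · have hij : i = j := by
          have : i ∈ ({j} : Set α) := hEE' ▸ ⟨h, hi⟩
          exact this
        subst hij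
        rw [hxM i h, sub_self, sub_self]
      · show (if i ∈ M.E then y i - y j else y' i - y' j) = y' i - y' j
        rw [if_neg h]
    have hxj0 : x j = 0 := by rw [hxM j hjM.1, sub_self]
    refine ⟨x, -(y j), -(y' j), ?_, fun i hi => by rw [hxM i hi]; ring,
      fun i hi => by rw [hxM' i hi]; ring⟩
    intro C hC
    rcases (hPC C).mp hC with h | h | ⟨C₁, C₂, hC₁, hjC₁, hC₂, hjC₂, rfl⟩
    · obtain ⟨i, hi, i', hi', hne, heq, hmin⟩ := hy C h
      have hsub : C ⊆ M.E := h.1.subset_ground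
      exact ⟨i, hi, i', hi', hne, by rw [hxM i (hsub hi), hxM i' (hsub hi'), heq],
        fun k hk => by rw [hxM i (hsub hi), hxM k (hsub hk)]; linarith [hmin k hk]⟩
    · obtain ⟨i, hi, i', hi', hne, heq, hmin⟩ := hy' C h
      have hsub : C ⊆ M'.E := h.1.subset_ground
      exact ⟨i, hi, i', hi', hne, by rw [hxM' i (hsub hi), hxM' i' (hsub hi'), heq],
        fun k hk => by rw [hxM' i (hsub hi), hxM' k (hsub hk)]; linarith [hmin k hk]⟩
    · have hsub₁ : C₁ ⊆ M.E := hC₁.1.subset_ground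
      have hsub₂ : C₂ ⊆ M'.E := hC₂.1.subset_ground
      obtain ⟨i₁, hi₁, i₁', hi₁', hne₁, heq₁, hmin₁⟩ := hy C₁ hC₁
      obtain ⟨i₂, hi₂, i₂', hi₂', hne₂, heq₂, hmin₂⟩ := hy' C₂ hC₂
      have e₁ : ∀ k ∈ C₁, x k = y k - y j := fun k hk => hxM k (hsub₁ hk)
      have e₂ : ∀ k ∈ C₂, x k = y' k - y' j := fun k hk => hxM' k (hsub₂ hk)
      have xeq₁ : x i₁ = x i₁' := by rw [e₁ _ hi₁, e₁ _ hi₁', heq₁]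
      have xmin₁ : ∀ k ∈ C₁, x i₁ ≤ x k := fun k hk => by
        rw [e₁ _ hi₁, e₁ _ hk]; linarith [hmin₁ k hk]
      have xeq₂ : x i₂ = x i₂' := by rw [e₂ _ hi₂, e₂ _ hi₂', heq₂]
      have xmin₂ : ∀ k ∈ C₂, x i₂ ≤ x k := fun k hk => by
        rw [e₂ _ hi₂, e₂ _ hk]; linarith [hmin₂ k hk]
      have hdisj : ∀ i ∈ C₁, i ≠ j → ∀ i' ∈ C₂, i' ≠ j → i ≠ i' := by
        intro i hi hij i' hi' hij' he
        subst he
        have : i ∈ ({j} : Set α) := hEE' ▸ ⟨hsub₁ hi, hsub₂ hi'⟩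
        exact hij this
      rcases le_total (x i₁) (x i₂) with hab | hab
      · exact key_aux j C₁ C₂ x hjC₁ hjC₂ hxj0 hdisj i₁ hi₁ i₁' hi₁' hne₁ xeq₁
          xmin₁ i₂ hi₂ i₂' hi₂' hne₂ xeq₂ xmin₂ hab
      · have hdisj' : ∀ i ∈ C₂, i ≠ j → ∀ i' ∈ C₁, i' ≠ j → i ≠ i' :=
          fun i hi hij i' hi' hij' he => hdisj i' hi' hij' i hi hij he.symm
        have := key_aux j C₂ C₁ x hjC₂ hjC₁ hxj0 hdisj' i₂ hi₂ i₂' hi₂' hne₂ xeq₂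
          xmin₂ i₁ hi₁ i₁' hi₁' hne₁ xeq₁ xmin₁ hab
        rwa [Set.union_comm] at this
end
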